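/- arXiv:2602.10694 — 2 statements merged into one kernel-verified Lean document; each statement's English description precedes it below -/
import Mathlib

section
/- Let f : ℝ → ℂ be n-times differentiable with bounded n-th derivative f^(n). Then the n-th divided difference f^[n] : ℝ^{n+1} → ℂ is bounded, with sup-norm bound ‖f^[n]‖_∞ ≤ ‖f^(n)‖_∞ / n!. -/
/-!
The Hermite–Genocchi integral runs over the simplex `1 ≥ t₁ ≥ ⋯ ≥ tₙ ≥ 0`, so its norm is at
most `sup ‖f⁽ⁿ⁾‖` times the volume of that simplex. Its images under the `n!` permutations of
coordinates have the same volume, lie in the unit cube, and overlap only where two coordinates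
coincide, a null set; hence the simplex has volume at most `1 / n!`.
-/

open MeasureTheory

/-- The `n`-th order divided difference of `f`, given by the Hermite–Genocchi formula:
`f^[n](λ₀,…,λₙ) = ∫_{1 ≥ t₁ ≥ … ≥ tₙ ≥ 0} f⁽ⁿ⁾(λ₀ + Σᵢ tᵢ (λᵢ - λᵢ₋₁)) dt`. -/
noncomputable def divDiff (n : ℕ) (f : ℝ → ℂ) (lam : Fin (n + 1) → ℝ) : ℂ :=
  ∫ t in {t : Fin n → ℝ | (∀ i, t i ∈ Set.Icc (0 : ℝ) 1) ∧ ∀ i j : Fin n, i ≤ j → t j ≤ t i},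
    iteratedDeriv n f (lam 0 + ∑ i : Fin n, t i * (lam i.succ - lam i.castSucc))

open Function

lemma Equiv.Perm.eq_of_antitone_comp {ι α : Type*} [LinearOrder ι] [Finite ι] [LinearOrder α]
    {t : ι → α} (ht : Injective t) {σ τ : Equiv.Perm ι}
    (hσ : Antitone (t ∘ σ)) (hτ : Antitone (t ∘ τ)) : σ = τ := by
  have hrange : Set.range (t ∘ σ) = Set.range (t ∘ τ) := by
    rw [Set.range_comp, Set.range_comp, σ.range_eq_univ, τ.range_eq_univ]
  have := (StrictAnti.range_inj (hσ.strictAnti_of_injective (ht.comp σ.injective))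
    (hτ.strictAnti_of_injective (ht.comp τ.injective))).mp hrange
  exact Equiv.ext fun i => ht (congrFun this i)

def orderedSimplex (ι : Type*) [LinearOrder ι] : Set (ι → ℝ) :=
  {t | (∀ i, t i ∈ Set.Icc 0 1) ∧ Antitone t}

section

variable {ι : Type*} [Fintype ι]

lemma volume_measurePreserving_comp_equiv (e : ι ≃ ι) :
    MeasurePreserving (fun t : ι → ℝ => t ∘ e) volume volume := by
  convert volume_measurePreserving_piCongrLeft (fun _ : ι => ℝ) e.symm using 1
  ext t i
  simp [MeasurableEquiv.coe_piCongrLeft, Equiv.piCongrLeft_apply_eq_cast]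

lemma volume_setOf_not_injective : volume {t : ι → ℝ | ¬ Injective t} = 0 := by
  classical
  have hsub : {t : ι → ℝ | ¬ Injective t} ⊆
      ⋃ (i : ι) (j : ι) (_ : i ≠ j), {t : ι → ℝ | t i = t j} := by
    intro t ht
    obtain ⟨i, j, hij, hne⟩ : ∃ i j, t i = t j ∧ i ≠ j := by
      simpa [Injective] using ht
    simp only [Set.mem_iUnion]
    exact ⟨i, j, hne, hij⟩
  refine measure_mono_null hsub <| measure_iUnion_null fun i => measure_iUnion_null fun j =>
    measure_iUnion_null fun hij => ?_
  let coordSub : (ι → ℝ) →ₗ[ℝ] ℝ :=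
    LinearMap.proj (R := ℝ) (φ := fun _ : ι => ℝ) i - LinearMap.proj j
  have hker : {t : ι → ℝ | t i = t j} = (LinearMap.ker coordSub : Set (ι → ℝ)) := by
    ext t
    simp [coordSub, sub_eq_zero]
  rw [hker]
  refine Measure.addHaar_submodule _ _ fun htop => ?_
  have : Pi.single i 1 ∈ LinearMap.ker coordSub := htop ▸ Submodule.mem_top
  simp [coordSub, hij.symm] at this

variable [LinearOrder ι]

lemma measurableSet_orderedSimplex : MeasurableSet (orderedSimplex ι) := by
  simp only [orderedSimplex, Antitone]
  measurability

lemma volume_orderedSimplex_le :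
    volume (orderedSimplex ι) ≤ ((Fintype.card ι).factorial : ENNReal)⁻¹ := by
  classical
  let copy (σ : Equiv.Perm ι) : Set (ι → ℝ) := (· ∘ σ) ⁻¹' orderedSimplex ι
  have hmeas (σ : Equiv.Perm ι) : MeasurableSet (copy σ) :=
    (volume_measurePreserving_comp_equiv σ).measurable measurableSet_orderedSimplex
  have hvol (σ : Equiv.Perm ι) : volume (copy σ) = volume (orderedSimplex ι) :=
    (volume_measurePreserving_comp_equiv σ).measure_preimage
      measurableSet_orderedSimplex.nullMeasurableSet
  have hdisj : Pairwise (AEDisjoint volume on copy) := by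
    refine fun σ τ hne => measure_mono_null ?_ volume_setOf_not_injective
    rintro t ⟨hσ, hτ⟩ ht
    exact hne (Equiv.Perm.eq_of_antitone_comp ht hσ.2 hτ.2)
  have hcube : (⋃ σ, copy σ) ⊆ Set.univ.pi fun _ => Set.Icc 0 1 := by
    rintro t ht i -
    obtain ⟨σ, hσ⟩ := Set.mem_iUnion.1 ht
    simpa using hσ.1 (σ⁻¹ i)
  have : (Fintype.card ι).factorial * volume (orderedSimplex ι) ≤ 1 :=
    calc (Fintype.card ι).factorial * volume (orderedSimplex ι)
        = ∑ σ, volume (copy σ) := by simp [hvol, Fintype.card_perm]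
      _ = volume (⋃ σ, copy σ) := by
        rw [measure_iUnion₀ hdisj fun σ => (hmeas σ).nullMeasurableSet, tsum_fintype]
      _ ≤ volume (Set.univ.pi fun _ : ι => Set.Icc (0 : ℝ) 1) := measure_mono hcube
      _ = 1 := by simp [Real.volume_Icc_pi]
  rwa [ENNReal.le_inv_iff_mul_le, mul_comm]

end

theorem divDiff_bound_general (n : ℕ) (f : ℝ → ℂ)
    (C : ℝ) (hC : ∀ x : ℝ, ‖iteratedDeriv n f x‖ ≤ C) :
    ∀ lam : Fin (n + 1) → ℝ, ‖divDiff n f lam‖ ≤ C / n.factorial := by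
  intro lam
  have hvol := volume_orderedSimplex_le (ι := Fin n)
  rw [Fintype.card_fin] at hvol
  have hfin : volume (orderedSimplex (Fin n)) < ⊤ := hvol.trans_lt (by simp [Nat.factorial_pos])
  -- the domain of integration of `divDiff` is `orderedSimplex (Fin n)` with `Antitone` unfolded
  calc ‖divDiff n f lam‖ ≤ C * volume.real (orderedSimplex (Fin n)) :=
        norm_setIntegral_le_of_norm_le_const hfin fun _ _ => hC _
    _ ≤ C * (n.factorial : ℝ)⁻¹ := by
        gcongr
        · exact (norm_nonneg _).trans (hC 0)
        · simpa [measureReal_def] using ENNReal.toReal_mono (by simp [Nat.factorial_ne_zero]) hvol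
    _ = C / n.factorial := div_eq_mul_inv _ _ |>.symm

/-- If `f` is `n`-times differentiable with `‖f⁽ⁿ⁾‖_∞ ≤ C`, then the `n`-th divided
difference is bounded by `C / n!`. -/
theorem divDiff_bound (n : ℕ) (f : ℝ → ℂ)
    (hdiff : ∀ k < n, Differentiable ℝ (iteratedDeriv k f))
    (C : ℝ) (hC : ∀ x : ℝ, ‖iteratedDeriv n f x‖ ≤ C) :
    ∀ lam : Fin (n + 1) → ℝ, ‖divDiff n f lam‖ ≤ C / n.factorial :=
  divDiff_bound_general n f C hC
end

section
/- Let p ∈ (1,∞). Consider the commutative measure space (0,1) with Lebesgue measure, let a ≡ 1 (the constant function 1) and let b ∈ L^p(0,1) be a nonnegative function with b² ∉ L^p(0,1) (equivalently b ∉ L^{2p}(0,1)). Define φ'(t) = -b/(2+tb)² ∈ L^p(0,1) for t ≥ 0. Then the map t ↦ φ'(t) is not differentiable at t = 0 in L^p(0,1)-norm; more precisely, (φ'(t)-φ'(0))/t = b²/(2+tb)² + t·b³/(4(2+tb)²) has no limit in L^p(0,1) as t → 0⁺. -/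
open MeasureTheory Filter Topology
open scoped ENNReal

/-!
As `t → 0⁺` the difference quotient converges pointwise to the derivative of
`s ↦ -b/(2+sb)²` at `s = 0`, namely `b²/4`. Convergence in `L^p` forces a subsequence to
converge almost everywhere, so an `L^p`-limit would agree a.e. with `b²/4`, which is not in `L^p`.
-/

theorem MeasureTheory.ae_eq_of_tendsto_eLpNorm_of_ae_tendsto {α E ι : Type*}
    [MeasurableSpace α] {μ : Measure α} [NormedAddCommGroup E] {p : ℝ≥0∞} {l : Filter ι}
    [l.NeBot] [l.IsCountablyGenerated] {F : ι → α → E} {f g : α → E} (hp : p ≠ 0)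
    (hF : ∀ i, AEStronglyMeasurable (F i) μ) (hg : AEStronglyMeasurable g μ)
    (hFg : Tendsto (fun i => eLpNorm (F i - g) p μ) l (𝓝 0))
    (hFf : ∀ᵐ x ∂μ, Tendsto (fun i => F i x) l (𝓝 (f x))) :
    g =ᵐ[μ] f := by
  obtain ⟨ns, hns, hae⟩ :=
    (tendstoInMeasure_of_tendsto_eLpNorm hp hF hg hFg).exists_seq_tendsto_ae'
  filter_upwards [hae, hFf] with x hgx hfx
  exact tendsto_nhds_unique hgx (hfx.comp hns)

theorem hasDerivAt_neg_div_two_add_mul_sq (c : ℝ) :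
    HasDerivAt (fun s : ℝ => -c / (2 + s * c) ^ 2) (c ^ 2 / 4) 0 := by
  have hlin : HasDerivAt (fun s : ℝ => 2 + s * c) c 0 := by
    simpa using ((hasDerivAt_id' (0 : ℝ)).mul_const c).const_add 2
  refine ((hasDerivAt_const (0 : ℝ) (-c)).fun_div (hlin.fun_pow 2) (by norm_num)).congr_deriv ?_
  norm_num
  ring

theorem not_differentiable_Lp_counterexample_general
    (p : ℝ≥0∞) (hp1 : 1 < p)
    (μ : Measure ℝ)
    (b : ℝ → ℝ) (hb_meas : Measurable b)
    (hb2_not_mem : ¬ MemLp (fun x => (b x) ^ 2) p μ)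
    (φ' : ℝ → ℝ → ℝ) (hφ' : ∀ t x, φ' t x = -(b x) / (2 + t * b x) ^ 2) :
    ¬ ∃ g : ℝ → ℝ, MemLp g p μ ∧
      Tendsto (fun t : ℝ => eLpNorm (fun x => (φ' t x - φ' 0 x) / t - g x) p μ)
        (𝓝[>] 0) (𝓝 0) := by
  rintro ⟨g, hg, htend⟩
  have hslope (x : ℝ) :
      Tendsto (fun t => (φ' t x - φ' 0 x) / t) (𝓝[>] 0) (𝓝 (b x ^ 2 / 4)) := by
    simpa [hφ', div_eq_inv_mul] using
      (hasDerivAt_neg_div_two_add_mul_sq (b x)).tendsto_slope_zero_right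
  have hmeas (t : ℝ) : AEStronglyMeasurable (fun x => (φ' t x - φ' 0 x) / t) μ := by
    simp only [hφ']
    exact Measurable.aestronglyMeasurable (by fun_prop)
  have hg_eq : g =ᵐ[μ] fun x => b x ^ 2 / 4 :=
    ae_eq_of_tendsto_eLpNorm_of_ae_tendsto (zero_lt_one.trans hp1).ne' hmeas
      hg.aestronglyMeasurable htend (ae_of_all _ hslope)
  exact hb2_not_mem <| by
    simpa [mul_div_cancel₀] using (hg.ae_eq hg_eq).const_mul 4

/-- On `L^p(0,1)`, `1 < p < ∞`, with `a ≡ 1` and `b ≥ 0` in `L^p \ L^{2p}` (i.e. `b² ∉ L^p`),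
the map `t ↦ φ'(t) = -b/(2+tb)²` is not differentiable at `t = 0` in `L^p`-norm: the difference
quotient `(φ'(t) - φ'(0))/t` has no limit in `L^p(0,1)` as `t → 0⁺`. -/
theorem not_differentiable_Lp_counterexample
    (p : ℝ≥0∞) (hp1 : 1 < p) (hp2 : p ≠ ∞)
    (μ : Measure ℝ) (hμ : μ = volume.restrict (Set.Ioo (0 : ℝ) 1))
    (b : ℝ → ℝ) (hb_meas : Measurable b) (hb_nonneg : ∀ x, 0 ≤ b x)
    (hb_mem : MemLp b p μ)
    (hb2_not_mem : ¬ MemLp (fun x => (b x) ^ 2) p μ)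
    (φ' : ℝ → ℝ → ℝ) (hφ' : ∀ t x, φ' t x = -(b x) / (2 + t * b x) ^ 2) :
    ¬ ∃ g : ℝ → ℝ, MemLp g p μ ∧
      Tendsto (fun t : ℝ => eLpNorm (fun x => (φ' t x - φ' 0 x) / t - g x) p μ)
        (𝓝[>] 0) (𝓝 0) :=
  not_differentiable_Lp_counterexample_general p hp1 μ b hb_meas hb2_not_mem φ' hφ'
end
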